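/- For the star graph transition matrix P = v e_Sᵀ + e_S vᵀ/(S−1), the successor representation satisfies (I − γP)⁻¹ = I + (γ²/(1−γ²))(vvᵀ/(S−1) + e_S e_Sᵀ) + (γ/(1−γ²)) P, for γ ∈ (0,1). -/

import Mathlib

/-!
With `Q = vvᵀ/(S-1) + e eᵀ`, the orthogonality relations `e ⬝ᵥ e = 1`, `e ⬝ᵥ v = 0`,
`v ⬝ᵥ v = S - 1` give `P² = Q` and `PQ = P`, so `P³ = P`. In any algebra an element with
`P³ = P` has `(1 - γP)⁻¹ = 1 + γ²/(1-γ²) P² + γ/(1-γ²) P`: this is the Neumann series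
`∑ γᵏ Pᵏ` with the even and odd powers collapsed onto `P²` and `P`.
-/

open Matrix

theorem one_sub_smul_mul_eq_one_of_pow_three_eq_self {K A : Type*} [Field K] [Ring A] [Algebra K A]
    {P : A} (hP : P ^ 3 = P) {γ : K} (hγ : 1 - γ ^ 2 ≠ 0) :
    (1 - γ • P) * (1 + (γ ^ 2 / (1 - γ ^ 2)) • P ^ 2 + (γ / (1 - γ ^ 2)) • P) = 1 := by
  set a := γ ^ 2 / (1 - γ ^ 2)
  set b := γ / (1 - γ ^ 2)
  have ha : a - γ * b = 0 := by simp only [a, b]; field_simp; ring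
  have hb : b - γ - γ * a = 0 := by simp only [a, b]; field_simp; ring
  calc (1 - γ • P) * (1 + a • P ^ 2 + b • P)
      = 1 + (a - γ * b) • P ^ 2 + (b - γ - γ * a) • P := by
        simp only [sub_mul, mul_add, one_mul, mul_one, smul_mul_smul_comm, ← sq, ← pow_succ', hP]
        module
    _ = 1 := by rw [ha, hb, zero_smul, zero_smul, add_zero, add_zero]

section StarVectors

variable {n K : Type*} [Fintype n] [DecidableEq n] [CommRing K] (s : n)

theorem single_dotProduct_single_self : Pi.single s (1 : K) ⬝ᵥ Pi.single s 1 = 1 := by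
  simp

theorem single_dotProduct_one_sub_single : Pi.single s (1 : K) ⬝ᵥ (1 - Pi.single s 1) = 0 := by
  simp

theorem one_sub_single_dotProduct_self :
    (1 - Pi.single s (1 : K)) ⬝ᵥ (1 - Pi.single s 1) = (Fintype.card n : K) - 1 := by
  simp [sub_dotProduct, dotProduct_sub]

end StarVectors

section StarGraph

variable {n K : Type*} [Fintype n] [DecidableEq n] [CommRing K] {v e : n → K} {c : K}

theorem vecMulVec_add_smul_vecMulVec_sq (hee : e ⬝ᵥ e = 1) (hev : e ⬝ᵥ v = 0)
    (hvv : c * (v ⬝ᵥ v) = 1) :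
    (vecMulVec v e + c • vecMulVec e v) ^ 2 = c • vecMulVec v v + vecMulVec e e := by
  have hve : v ⬝ᵥ e = 0 := by rw [dotProduct_comm, hev]
  simp only [sq, add_mul, mul_add, smul_mul_smul_comm, Matrix.smul_mul, Matrix.mul_smul,
    vecMulVec_mul_vecMulVec, hee, hev, hve, vecMulVec_smul, smul_smul, hvv]
  module

theorem vecMulVec_add_smul_vecMulVec_pow_three (hee : e ⬝ᵥ e = 1) (hev : e ⬝ᵥ v = 0)
    (hvv : c * (v ⬝ᵥ v) = 1) :
    (vecMulVec v e + c • vecMulVec e v) ^ 3 = vecMulVec v e + c • vecMulVec e v := by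
  have hve : v ⬝ᵥ e = 0 := by rw [dotProduct_comm, hev]
  rw [pow_succ, vecMulVec_add_smul_vecMulVec_sq hee hev hvv]
  simp only [add_mul, mul_add, smul_mul_smul_comm, Matrix.smul_mul, Matrix.mul_smul,
    vecMulVec_mul_vecMulVec, hee, hev, hve, vecMulVec_smul, smul_smul, hvv]
  module

end StarGraph

theorem star_graph_successor_representation {S : ℕ} (hS : 2 ≤ S)
    (v e : Fin S → ℝ)
    (hv : ∀ i, v i = if (i : ℕ) = S - 1 then 0 else 1)
    (he : ∀ i, e i = if (i : ℕ) = S - 1 then 1 else 0)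
    (P : Matrix (Fin S) (Fin S) ℝ)
    (hP : P = Matrix.vecMulVec v e + ((S : ℝ) - 1)⁻¹ • Matrix.vecMulVec e v)
    (γ : ℝ) (hγ : γ ∈ Set.Ioo (0 : ℝ) 1) :
    (1 - γ • P)⁻¹
      = 1 + (γ ^ 2 / (1 - γ ^ 2)) •
          (((S : ℝ) - 1)⁻¹ • Matrix.vecMulVec v v + Matrix.vecMulVec e e)
        + (γ / (1 - γ ^ 2)) • P := by
  let s : Fin S := ⟨S - 1, by omega⟩
  have he_single : e = Pi.single s 1 := funext fun i => by
    simp only [he, Pi.single_apply, Fin.ext_iff, s]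
  have hv_single : v = 1 - Pi.single s 1 := funext fun i => by
    rw [hv, Pi.sub_apply, ← he_single, he]
    split_ifs <;> norm_num
  have hee : e ⬝ᵥ e = 1 := he_single ▸ single_dotProduct_single_self s
  have hev : e ⬝ᵥ v = 0 := he_single ▸ hv_single ▸ single_dotProduct_one_sub_single s
  have hvv : ((S : ℝ) - 1)⁻¹ * (v ⬝ᵥ v) = 1 := by
    rw [hv_single, one_sub_single_dotProduct_self, Fintype.card_fin]
    exact inv_mul_cancel₀ (by have : (2 : ℝ) ≤ S := mod_cast hS; linarith)
  have hγ_sq : 1 - γ ^ 2 ≠ 0 := by nlinarith [hγ.1, hγ.2]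
  rw [← vecMulVec_add_smul_vecMulVec_sq hee hev hvv, ← hP]
  exact inv_eq_right_inv <| one_sub_smul_mul_eq_one_of_pow_three_eq_self
    (hP ▸ vecMulVec_add_smul_vecMulVec_pow_three hee hev hvv) hγ_sq
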